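/- With three matter sectors f, g, h, symplectic forms ϖ, ϖ_f, ϖ_g, ϖ_h whose total sum Ω_{fgh} is symplectic, and constraints X^{f,g,h} = X + Σ_i x^i + Σ_{i<j} x^{i,j} (no triple interaction term), suppose the interaction pieces of the Hamiltonian vector fields satisfy ι_{𝕩^{f,g}} ϖ_h = ι_{𝕩^{g,h}} ϖ_f = ι_{𝕩^{f,h}} ϖ_g = 0 (and likewise for Y). Then the Hamiltonian vector field of X^{f,g,h} has vanishing triple-interaction component 𝕩^{f,g,h} = 0, and the Poisson bracket satisfies {X^{f,g,h}, Y^{f,g,h}}_{fgh} = Σ_{pairs (i,j)} {X^{i,j}, Y^{i,j}}_{ij} − Σ_i {X^i, Y^i}_i + {X,Y} + Σ^{cycl}_{ijk=fgh} (ι_{𝕩^{i,j}} ι_{𝕪^k} + ι_{𝕪^{i,j}} ι_{𝕩^k})(ϖ + ϖ_i + ϖ_j) + Σ^{cycl}_{ijk=fgh} (ι_{𝕩^{i,j}} ι_{𝕪^{i,k}} + ι_{𝕪^{i,j}} ι_{𝕩^{i,k}})(ϖ + ϖ_i) + Σ^{cycl}_{ijk=fgh} (ι_{𝕩^i} ι_{𝕪^j}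 + ι_{𝕪^i} ι_{𝕩^j}) ϖ_k. -/

import Mathlib

/-!
Both sides expand by bilinearity into pairings `ϖ_•(a, b)` of a component `a` of the Hamiltonian
vector field of `X^{f,g,h}` with a component `b` of that of `Y^{f,g,h}`. Call the set of sectors
touched by the form and by the two components the support `K` of the pairing. The brackets on the
right count such a pairing by inclusion–exclusion over the sector sets containing `K`, i.e.
`3 - 3 + 1`, `2 - 1` or `1` times when `|K| = 0, 1, 2`. The pairings supported on all three
sectors are the correction sums: the vanishing of `ι_{𝕩^{i,j}} ϖ_k` removes the others, and
symmetry of the forms identifies `ι_𝕪 ι_𝕩` with `ι_𝕩 ι_𝕪`. The triple component vanishes because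
its source `ι_{𝕩^{f,g}} ϖ_h + ι_{𝕩^{g,h}} ϖ_f + ι_{𝕩^{f,h}} ϖ_g` does and `Ω_{fgh}` is nondegenerate.
-/

/-- `pW, pf, pg, ph` are `ϖ, ϖ_f, ϖ_g, ϖ_h`; `X, xf, …, xgh` are the components `𝕏, 𝕩^f, …, 𝕩^{g,h}`
of the Hamiltonian vector field of `X^{f,g,h}`, and likewise for `Y`. -/
theorem poisson_bracket_sum_of_four_general
    {V : Type*} [AddCommGroup V] [Module ℝ V]
    (pW pf pg ph : V →ₗ[ℝ] V →ₗ[ℝ] ℝ)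
    (hWs : ∀ a b : V, pW a b = pW b a)
    (hfs : ∀ a b : V, pf a b = pf b a)
    (hgs : ∀ a b : V, pg a b = pg b a)
    (hhs : ∀ a b : V, ph a b = ph b a)
    -- Ω_{fgh} = ϖ + ϖ_f + ϖ_g + ϖ_h is symplectic
    (hOnd : ∀ v : V, (∀ w : V, (pW + pf + pg + ph) v w = 0) → v = 0)
    (X xf xg xh xfg xfh xgh : V)
    (Y yf yg yh yfg yfh ygh : V)
    -- ι_{𝕩^{f,g}} ϖ_h = ι_{𝕩^{g,h}} ϖ_f = ι_{𝕩^{f,h}} ϖ_g = 0 (and for y)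
    (hvxfg : ∀ w : V, ph xfg w = 0)
    (hvxgh : ∀ w : V, pf xgh w = 0)
    (hvxfh : ∀ w : V, pg xfh w = 0)
    (hvyfg : ∀ w : V, ph yfg w = 0)
    (hvygh : ∀ w : V, pf ygh w = 0)
    (hvyfh : ∀ w : V, pg yfh w = 0) :
    -- the triple-interaction component 𝕩^{f,g,h}, defined by
    -- ι_{𝕩^{f,g,h}} Ω_{fgh} = −ι_{𝕩^{f,g}} ϖ_h − ι_{𝕩^{g,h}} ϖ_f − ι_{𝕩^{f,h}} ϖ_g,
    -- vanishes
    (∀ z : V, (∀ w : V, (pW + pf + pg + ph) z w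
        = -(ph xfg w + pf xgh w + pg xfh w)) → z = 0) ∧
    -- the Poisson bracket formula
    ((pW + pf + pg + ph) (X + xf + xg + xh + xfg + xfh + xgh)
        (Y + yf + yg + yh + yfg + yfh + ygh)
      = (pW + pf + pg) (X + xf + xg + xfg) (Y + yf + yg + yfg)
        + (pW + pf + ph) (X + xf + xh + xfh) (Y + yf + yh + yfh)
        + (pW + pg + ph) (X + xg + xh + xgh) (Y + yg + yh + ygh)
        - (pW + pf) (X + xf) (Y + yf)
        - (pW + pg) (X + xg) (Y + yg)
        - (pW + ph) (X + xh) (Y + yh)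
        + pW X Y
        + ((pW + pf + pg) xfg yh + (pW + pf + pg) yfg xh)
        + ((pW + pg + ph) xgh yf + (pW + pg + ph) ygh xf)
        + ((pW + ph + pf) xfh yg + (pW + ph + pf) yfh xg)
        + ((pW + pf) xfg yfh + (pW + pf) yfg xfh)
        + ((pW + pg) xgh yfg + (pW + pg) ygh xfg)
        + ((pW + ph) xfh ygh + (pW + ph) yfh xgh)
        + (ph xf yg + ph yf xg)
        + (pf xg yh + pf yg xh)
        + (pg xh yf + pg yh xf)) := by
  refine ⟨fun z hz => hOnd z fun w => by rw [hz w, hvxfg w, hvxgh w, hvxfh w]; ring, ?_⟩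
  have hvyfg' : ∀ w, ph w yfg = 0 := fun w => (hhs w yfg).trans (hvyfg w)
  have hvygh' : ∀ w, pf w ygh = 0 := fun w => (hfs w ygh).trans (hvygh w)
  have hvyfh' : ∀ w, pg w yfh = 0 := fun w => (hgs w yfh).trans (hvyfh w)
  -- `simp` uses the symmetry hypotheses as ordered rewrites, putting each pairing in a canonical order.
  simp only [LinearMap.add_apply, map_add, hvxfg, hvxgh, hvxfh, hvyfg', hvygh', hvyfh',
    hWs, hfs, hgs, hhs, add_zero]
  ring

/-- Theorem (Poisson brackets of a sum of four terms, no triple interaction).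
`pW, pf, pg, ph` are ϖ, ϖ_f, ϖ_g, ϖ_h; `pW + pf + pg + ph` is Ω_{fgh}.
`X, xf, …, xgh` are the components 𝕏, 𝕩^f, …, 𝕩^{g,h} of the Hamiltonian
vector field of X^{f,g,h} = X + Σ_i x^i + Σ_{i<j} x^{i,j}, similarly for Y.
Under the vanishing assumptions ι_{𝕩^{i,j}} ϖ_k = 0 (cyclic), the triple
component 𝕩^{f,g,h} vanishes and the bracket formula holds. -/
theorem poisson_bracket_sum_of_four
    {V : Type*} [AddCommGroup V] [Module ℝ V]
    (pW pf pg ph : V →ₗ[ℝ] V →ₗ[ℝ] ℝ)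
    (hWs : ∀ a b : V, pW a b = pW b a)
    (hfs : ∀ a b : V, pf a b = pf b a)
    (hgs : ∀ a b : V, pg a b = pg b a)
    (hhs : ∀ a b : V, ph a b = ph b a)
    -- Ω_{fgh} = ϖ + ϖ_f + ϖ_g + ϖ_h is symplectic
    (hOnd : ∀ v : V, (∀ w : V, (pW + pf + pg + ph) v w = 0) → v = 0)
    (dX dxf dxg dxh dxfg dxfh dxgh : V →ₗ[ℝ] ℝ)
    (dY dyf dyg dyh dyfg dyfh dygh : V →ₗ[ℝ] ℝ)
    (X xf xg xh xfg xfh xgh : V)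
    (Y yf yg yh yfg yfh ygh : V)
    (hX : ∀ w : V, pW X w = dX w)
    (hY : ∀ w : V, pW Y w = dY w)
    (hxf : ∀ w : V, pf X w + (pW + pf) xf w = dxf w)
    (hxg : ∀ w : V, pg X w + (pW + pg) xg w = dxg w)
    (hxh : ∀ w : V, ph X w + (pW + ph) xh w = dxh w)
    (hyf : ∀ w : V, pf Y w + (pW + pf) yf w = dyf w)
    (hyg : ∀ w : V, pg Y w + (pW + pg) yg w = dyg w)
    (hyh : ∀ w : V, ph Y w + (pW + ph) yh w = dyh w)
    (hxfg : ∀ w : V, (pW + pf + pg) xfg w + pf xg w + pg xf w = dxfg w)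
    (hxfh : ∀ w : V, (pW + pf + ph) xfh w + pf xh w + ph xf w = dxfh w)
    (hxgh : ∀ w : V, (pW + pg + ph) xgh w + pg xh w + ph xg w = dxgh w)
    (hyfg : ∀ w : V, (pW + pf + pg) yfg w + pf yg w + pg yf w = dyfg w)
    (hyfh : ∀ w : V, (pW + pf + ph) yfh w + pf yh w + ph yf w = dyfh w)
    (hygh : ∀ w : V, (pW + pg + ph) ygh w + pg yh w + ph yg w = dygh w)
    -- ι_{𝕩^{f,g}} ϖ_h = ι_{𝕩^{g,h}} ϖ_f = ι_{𝕩^{f,h}} ϖ_g = 0 (and for y)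
    (hvxfg : ∀ w : V, ph xfg w = 0)
    (hvxgh : ∀ w : V, pf xgh w = 0)
    (hvxfh : ∀ w : V, pg xfh w = 0)
    (hvyfg : ∀ w : V, ph yfg w = 0)
    (hvygh : ∀ w : V, pf ygh w = 0)
    (hvyfh : ∀ w : V, pg yfh w = 0) :
    -- the triple-interaction component 𝕩^{f,g,h}, defined by
    -- ι_{𝕩^{f,g,h}} Ω_{fgh} = −ι_{𝕩^{f,g}} ϖ_h − ι_{𝕩^{g,h}} ϖ_f − ι_{𝕩^{f,h}} ϖ_g,
    -- vanishes
    (∀ z : V, (∀ w : V, (pW + pf + pg + ph) z w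
        = -(ph xfg w + pf xgh w + pg xfh w)) → z = 0) ∧
    -- the Poisson bracket formula
    ((pW + pf + pg + ph) (X + xf + xg + xh + xfg + xfh + xgh)
        (Y + yf + yg + yh + yfg + yfh + ygh)
      = (pW + pf + pg) (X + xf + xg + xfg) (Y + yf + yg + yfg)
        + (pW + pf + ph) (X + xf + xh + xfh) (Y + yf + yh + yfh)
        + (pW + pg + ph) (X + xg + xh + xgh) (Y + yg + yh + ygh)
        - (pW + pf) (X + xf) (Y + yf)
        - (pW + pg) (X + xg) (Y + yg)
        - (pW + ph) (X + xh) (Y + yh)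
        + pW X Y
        + ((pW + pf + pg) xfg yh + (pW + pf + pg) yfg xh)
        + ((pW + pg + ph) xgh yf + (pW + pg + ph) ygh xf)
        + ((pW + ph + pf) xfh yg + (pW + ph + pf) yfh xg)
        + ((pW + pf) xfg yfh + (pW + pf) yfg xfh)
        + ((pW + pg) xgh yfg + (pW + pg) ygh xfg)
        + ((pW + ph) xfh ygh + (pW + ph) yfh xgh)
        + (ph xf yg + ph yf xg)
        + (pf xg yh + pf yg xh)
        + (pg xh yf + pg yh xf)) :=
  poisson_bracket_sum_of_four_general pW pf pg ph hWs hfs hgs hhs hOnd X xf xg xh xfg xfh xgh Y yf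
    yg yh yfg yfh ygh hvxfg hvxgh hvxfh hvyfg hvygh hvyfh
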